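/- Let A ⊂ X be nonempty and let f : X → ℝ be Lipschitz continuous on a neighborhood of A. Then inf_{‖h‖≤1} f⁰(A;h) < 0 if and only if 0 ∉ ∂f(A). Moreover, if 0 ∉ ∂f(A) and (ã, h̃) is a pair with ã ∈ ∂f(A), ‖h̃‖ ≤ 1, ‖ã‖ = min_{a ∈ ∂f(A)} ‖a‖, and f⁰(A;h̃) = min_{‖h‖≤1} f⁰(A;h), then h̃ is an optimal descent direction of f on A (in particular ‖h̃‖ = 1). -/

import Mathlib

set_option linter.unusedSectionVars false
set_option maxHeartbeats 1000000

open Filter Metric Set NormedSpace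
open scoped NNReal
open scoped Topology

variable {X : Type*} [NormedAddCommGroup X] [NormedSpace ℝ X]

/-- Clarke's generalized directional derivative
`f⁰(x;h) = limsup_{y→x, t↓0⁺} (f(y+th) − f(y))/t`. -/
noncomputable def clarkeDeriv (f : X → ℝ) (x : X) (h : X) : ℝ :=
  Filter.limsup (fun p : X × ℝ => (f (p.1 + p.2 • h) - f p.1) / p.2)
    ((nhds x) ×ˢ (nhdsWithin 0 (Set.Ioi 0)))

/-- Clarke's generalized gradient `∂f(x) = {a ∈ X* : ⟨a,h⟩ ≤ f⁰(x;h) ∀ h}`. -/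
def clarkeGrad (f : X → ℝ) (x : X) : Set (StrongDual ℝ X) :=
  {a | ∀ h : X, a h ≤ clarkeDeriv f x h}

/-- Directional derivative of `f` on the set `A`: `f⁰(A;h) = sup_{y∈A} f⁰(y;h)`. -/
noncomputable def setDeriv (f : X → ℝ) (A : Set X) (h : X) : ℝ :=
  sSup ((fun y => clarkeDeriv f y h) '' A)

/-- Gradient of `f` on the set `A`: the weak*-closed convex hull of `⋃_{y∈A} ∂f(y)`. -/
def setGrad (f : X → ℝ) (A : Set X) : Set (StrongDual ℝ X) :=
  {a | StrongDual.toWeakDual a ∈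
    closure ((StrongDual.toWeakDual (𝕜 := ℝ) (E := X)) '' (convexHull ℝ (⋃ y ∈ A, clarkeGrad f y)))}

/-- `h` is an optimal (steepest) descent direction of `f` on `A`. -/
noncomputable def IsOptimalDescent (f : X → ℝ) (A : Set X) (h : X) : Prop :=
  ‖h‖ = 1 ∧ (∀ h' : X, ‖h'‖ ≤ 1 → setDeriv f A h ≤ setDeriv f A h') ∧ setDeriv f A h < 0

/-- difference quotient -/
noncomputable def DQ (f : X → ℝ) (h : X) : X × ℝ → ℝ :=
  fun p => (f (p.1 + p.2 • h) - f p.1) / p.2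

lemma clarkeDeriv_eq (f : X → ℝ) (x h : X) :
    clarkeDeriv f x h = Filter.limsup (DQ f h) ((𝓝 x) ×ˢ (𝓝[>] (0:ℝ))) := rfl

lemma dq_bound {f : X → ℝ} {L : ℝ≥0} {U : Set X} (hU : IsOpen U)
    (lip : LipschitzOnWith L f U) {x : X} (hx : x ∈ U) (h : X) :
    ∀ᶠ p in (𝓝 x) ×ˢ (𝓝[>] (0:ℝ)), |DQ f h p| ≤ L * ‖h‖ := by
  obtain ⟨ε, hε, hball⟩ := Metric.isOpen_iff.1 hU x hx
  have h2 : Ioo (0:ℝ) (ε / (2 * (‖h‖ + 1))) ∈ 𝓝[>] (0:ℝ) :=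
    Ioo_mem_nhdsGT_of_mem ⟨le_refl 0, by positivity⟩
  filter_upwards [Filter.prod_mem_prod (Metric.ball_mem_nhds x (by linarith : (0:ℝ) < ε/2)) h2]
    with p hp
  obtain ⟨hy, ht0, ht1⟩ : p.1 ∈ ball x (ε/2) ∧ 0 < p.2 ∧ p.2 < ε / (2 * (‖h‖ + 1)) :=
    ⟨hp.1, hp.2.1, hp.2.2⟩
  have hnorm : ‖h‖ + 1 > 0 := by positivity
  have hyU : p.1 ∈ U := hball (mem_ball.2 (by have := mem_ball.1 hy; linarith [dist_nonneg (x := p.1) (y := x)]))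
  have hsm : ‖p.2 • h‖ = p.2 * ‖h‖ := by
    rw [norm_smul, Real.norm_eq_abs, abs_of_pos ht0]
  have ht2 : p.2 * ‖h‖ < ε / 2 := by
    calc p.2 * ‖h‖ ≤ p.2 * (‖h‖ + 1) := by nlinarith
    _ < ε / (2 * (‖h‖ + 1)) * (‖h‖ + 1) := by
        apply mul_lt_mul_of_pos_right ht1 hnorm
    _ = ε / 2 := by field_simp
  have hytU : p.1 + p.2 • h ∈ U := by
    apply hball
    rw [mem_ball]
    calc dist (p.1 + p.2 • h) x ≤ dist (p.1 + p.2 • h) p.1 + dist p.1 x := dist_triangle _ _ _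
    _ < ε / 2 + ε / 2 := by
        apply add_lt_add _ (mem_ball.1 hy)
        rw [dist_eq_norm, add_sub_cancel_left, hsm]; exact ht2
    _ = ε := by ring
  have key : |f (p.1 + p.2 • h) - f p.1| ≤ L * (p.2 * ‖h‖) := by
    have := lip.dist_le_mul _ hytU _ hyU
    rw [Real.dist_eq, dist_eq_norm, add_sub_cancel_left, hsm] at this
    exact this
  rw [DQ, abs_div, abs_of_pos ht0, div_le_iff₀ ht0]
  calc |f (p.1 + p.2 • h) - f p.1| ≤ L * (p.2 * ‖h‖) := key
  _ = ↑L * ‖h‖ * p.2 := by ring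

lemma dq_bddAbove {f : X → ℝ} {L : ℝ≥0} {U : Set X} (hU : IsOpen U)
    (lip : LipschitzOnWith L f U) {x : X} (hx : x ∈ U) (h : X) :
    IsBoundedUnder (· ≤ ·) ((𝓝 x) ×ˢ (𝓝[>] (0:ℝ))) (DQ f h) :=
  isBoundedUnder_of_eventually_le ((dq_bound hU lip hx h).mono fun _ hp => (abs_le.1 hp).2)

lemma dq_cobdd {f : X → ℝ} {L : ℝ≥0} {U : Set X} (hU : IsOpen U)
    (lip : LipschitzOnWith L f U) {x : X} (hx : x ∈ U) (h : X) :
    IsCoboundedUnder (· ≤ ·) ((𝓝 x) ×ˢ (𝓝[>] (0:ℝ))) (DQ f h) :=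
  IsCoboundedUnder.of_frequently_ge
    (((dq_bound hU lip hx h).mono fun _ hp => (abs_le.1 hp).1).frequently)

lemma clarkeDeriv_le_bound {f : X → ℝ} {L : ℝ≥0} {U : Set X} (hU : IsOpen U)
    (lip : LipschitzOnWith L f U) {x : X} (hx : x ∈ U) (h : X) :
    clarkeDeriv f x h ≤ L * ‖h‖ := by
  rw [clarkeDeriv_eq]
  exact limsup_le_of_le (dq_cobdd hU lip hx h)
    ((dq_bound hU lip hx h).mono fun _ hp => (abs_le.1 hp).2)

lemma neg_bound_le_clarkeDeriv {f : X → ℝ} {L : ℝ≥0} {U : Set X} (hU : IsOpen U)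
    (lip : LipschitzOnWith L f U) {x : X} (hx : x ∈ U) (h : X) :
    -(L * ‖h‖) ≤ clarkeDeriv f x h := by
  rw [clarkeDeriv_eq]
  exact le_limsup_of_frequently_le
    (((dq_bound hU lip hx h).mono fun _ hp => (abs_le.1 hp).1).frequently)
    (dq_bddAbove hU lip hx h)

lemma clarkeDeriv_zero (f : X → ℝ) (x : X) : clarkeDeriv f x (0 : X) = 0 := by
  rw [clarkeDeriv_eq]
  have : DQ f (0:X) = fun _ => (0:ℝ) := by
    funext p; simp [DQ]
  rw [this]
  exact limsup_const 0

lemma map_scale_filter {x : X} {c : ℝ} (hc : 0 < c) :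
    Filter.map (fun p : X × ℝ => (p.1, c * p.2)) ((𝓝 x) ×ˢ (𝓝[>] (0:ℝ)))
      = (𝓝 x) ×ˢ (𝓝[>] (0:ℝ)) := by
  have hmap : Filter.map (fun t : ℝ => c * t) (𝓝[>] (0:ℝ)) = 𝓝[>] (0:ℝ) := by
    have himg : (fun t : ℝ => c * t) '' (Ioi 0) = Ioi (0:ℝ) := by
      ext z
      constructor
      · rintro ⟨w, hw, rfl⟩; exact mul_pos hc hw
      · intro hz; exact ⟨z / c, div_pos hz hc, by field_simp⟩
    have hcoe : ⇑(Homeomorph.mulLeft₀ c hc.ne') = (fun t : ℝ => c * t) :=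
      Homeomorph.coe_mulLeft₀ c hc.ne'
    have := (Homeomorph.mulLeft₀ c hc.ne').isEmbedding.map_nhdsWithin_eq (Ioi 0) 0
    rw [hcoe] at this
    rw [this, himg]; norm_num
  have hfun : (fun p : X × ℝ => (p.1, c * p.2)) = Prod.map id (fun t : ℝ => c * t) := rfl
  rw [hfun, ← Filter.prod_map_right, hmap]

lemma limsup_comp_map {α β : Type*} (u : β → ℝ) (m : α → β) (F : Filter α) :
    Filter.limsup (u ∘ m) F = Filter.limsup u (Filter.map m F) := by
  unfold Filter.limsup
  rw [Filter.map_map]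

lemma clarkeDeriv_smul {f : X → ℝ} {L : ℝ≥0} {U : Set X} (hU : IsOpen U)
    (lip : LipschitzOnWith L f U) {x : X} (hx : x ∈ U) (h : X) {c : ℝ} (hc : 0 < c) :
    clarkeDeriv f x (c • h) = c * clarkeDeriv f x h := by
  set F := (𝓝 x) ×ˢ (𝓝[>] (0:ℝ)) with hF
  set φ : X × ℝ → X × ℝ := fun p => (p.1, c * p.2) with hφ
  have hfun : DQ f (c • h) = (fun p => c * DQ f h p) ∘ φ := by
    funext p
    simp only [Function.comp, DQ, hφ]
    rw [show p.2 • (c • h) = (c * p.2) • h by rw [smul_smul, mul_comm]]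
    rw [mul_div_assoc']
    rw [mul_div_mul_left _ _ hc.ne']
  have e : ℝ ≃o ℝ := OrderIso.mulLeft₀ c hc
  have hb := dq_bddAbove hU lip hx h
  have hcb := dq_cobdd hU lip hx h
  have hb' : IsBoundedUnder (· ≤ ·) F (fun p => c * DQ f h p) := by
    obtain ⟨b, hbb⟩ := hb
    exact ⟨c * b, by
      rw [Filter.eventually_map] at hbb ⊢
      exact hbb.mono fun p hp => by
        exact mul_le_mul_of_nonneg_left hp hc.le⟩
  have hcb' : IsCoboundedUnder (· ≤ ·) F (fun p => c * DQ f h p) := by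
    apply IsCoboundedUnder.of_frequently_ge
      (a := c * (-(L * ‖h‖)))
    apply Filter.Frequently.mono (((dq_bound hU lip hx h).mono
      fun _ hp => (abs_le.1 hp).1).frequently)
    intro p hp
    exact mul_le_mul_of_nonneg_left hp hc.le
  have key : c * Filter.limsup (DQ f h) F = Filter.limsup (fun p => c * DQ f h p) F := by
    have := OrderIso.limsup_apply (OrderIso.mulLeft₀ c hc) (u := DQ f h) (f := F) hb hcb
      (by simpa using hb') (by simpa using hcb')
    simpa using this
  rw [clarkeDeriv_eq, clarkeDeriv_eq, hfun, limsup_comp_map, map_scale_filter hc, ← key]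

lemma clarkeDeriv_add_le {f : X → ℝ} {L : ℝ≥0} {U : Set X} (hU : IsOpen U)
    (lip : LipschitzOnWith L f U) {x : X} (hx : x ∈ U) (h₁ h₂ : X) :
    clarkeDeriv f x (h₁ + h₂) ≤ clarkeDeriv f x h₁ + clarkeDeriv f x h₂ := by
  set F := (𝓝 x) ×ˢ (𝓝[>] (0:ℝ)) with hF
  set ψ : X × ℝ → X × ℝ := fun p => (p.1 + p.2 • h₂, p.2) with hψdef
  have hsnd : Filter.Tendsto (fun p : X × ℝ => p.2) F (𝓝 (0:ℝ)) :=
    tendsto_snd.mono_right nhdsWithin_le_nhds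
  have hψ : Filter.Tendsto ψ F F := by
    refine Filter.Tendsto.prodMk ?_ tendsto_snd
    have := tendsto_fst.add (hsnd.smul_const h₂)
    simpa using this
  have hfun : DQ f (h₁ + h₂) = fun p => DQ f h₁ (ψ p) + DQ f h₂ p := by
    funext p
    simp only [DQ, hψdef]
    rw [← add_div, sub_add_sub_cancel]
    congr 2
    rw [smul_add]
    abel
  -- bounds for the composed function
  have hbnd₁ : ∀ᶠ p in F, |DQ f h₁ (ψ p)| ≤ L * ‖h₁‖ := hψ.eventually (dq_bound hU lip hx h₁)
  have hb₁ : IsBoundedUnder (· ≤ ·) F (fun p => DQ f h₁ (ψ p)) :=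
    isBoundedUnder_of_eventually_le (hbnd₁.mono fun _ hp => (abs_le.1 hp).2)
  have hg₁ : IsBoundedUnder (· ≥ ·) F (fun p => DQ f h₁ (ψ p)) :=
    isBoundedUnder_of_eventually_ge (hbnd₁.mono fun _ hp => (abs_le.1 hp).1)
  have step1 : Filter.limsup (fun p => DQ f h₁ (ψ p)) F ≤ clarkeDeriv f x h₁ := by
    rw [clarkeDeriv_eq]
    have : Filter.limsup (fun p => DQ f h₁ (ψ p)) F = Filter.limsup (DQ f h₁) (Filter.map ψ F) :=
      limsup_comp_map (DQ f h₁) ψ F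
    rw [this]
    refine limsup_le_limsup_of_le hψ ?_ (dq_bddAbove hU lip hx h₁)
    apply IsCoboundedUnder.of_frequently_ge (a := -(L * ‖h₁‖))
    rw [Filter.frequently_map]
    exact (hbnd₁.mono fun _ hp => (abs_le.1 hp).1).frequently
  have main : Filter.limsup (DQ f (h₁ + h₂)) F ≤
      Filter.limsup (fun p => DQ f h₁ (ψ p)) F + Filter.limsup (DQ f h₂) F := by
    rw [hfun]
    have hrw : (fun p => DQ f h₁ (ψ p) + DQ f h₂ p)
        = (fun p => DQ f h₁ (ψ p)) + DQ f h₂ := rfl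
    rw [hrw]
    exact limsup_add_le hg₁ hb₁ (dq_cobdd hU lip hx h₂) (dq_bddAbove hU lip hx h₂)
  calc clarkeDeriv f x (h₁ + h₂) = Filter.limsup (DQ f (h₁ + h₂)) F := clarkeDeriv_eq f x _
  _ ≤ _ := main
  _ ≤ clarkeDeriv f x h₁ + clarkeDeriv f x h₂ := by
      rw [clarkeDeriv_eq f x h₂]
      exact add_le_add_left step1 _

lemma neg_clarkeDeriv_le {f : X → ℝ} {L : ℝ≥0} {U : Set X} (hU : IsOpen U)
    (lip : LipschitzOnWith L f U) {x : X} (hx : x ∈ U) (h : X) :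
    -clarkeDeriv f x (-h) ≤ clarkeDeriv f x h := by
  have h0 : (0:ℝ) ≤ clarkeDeriv f x h + clarkeDeriv f x (-h) := by
    have := clarkeDeriv_add_le hU lip hx h (-h)
    rw [add_neg_cancel, clarkeDeriv_zero] at this
    linarith
  linarith

/-- Hahn–Banach: existence of a subgradient attaining the directional derivative. -/
lemma exists_clarkeGrad_eq {f : X → ℝ} {L : ℝ≥0} {U : Set X} (hU : IsOpen U)
    (lip : LipschitzOnWith L f U) {x : X} (hx : x ∈ U) (h : X) :
    ∃ a : StrongDual ℝ X, a ∈ clarkeGrad f x ∧ a h = clarkeDeriv f x h := by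
  set N : X → ℝ := clarkeDeriv f x with hN
  have N_hom : ∀ c : ℝ, 0 < c → ∀ z : X, N (c • z) = c * N z := fun c hc z =>
    clarkeDeriv_smul hU lip hx z hc
  have N_add : ∀ z w : X, N (z + w) ≤ N z + N w := fun z w => clarkeDeriv_add_le hU lip hx z w
  have N_bound : ∀ z : X, N z ≤ L * ‖z‖ := fun z => clarkeDeriv_le_bound hU lip hx z
  have key : ∀ (g : X →ₗ[ℝ] ℝ), (∀ z, g z ≤ N z) →
      ∃ a : StrongDual ℝ X, (∀ z : X, a z = g z) ∧ a ∈ clarkeGrad f x := by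
    intro g hg
    have habs : ∀ z, ‖g z‖ ≤ L * ‖z‖ := by
      intro z
      rw [Real.norm_eq_abs, abs_le]
      constructor
      · have := (hg (-z)).trans (N_bound (-z))
        rw [map_neg, norm_neg] at this
        linarith
      · exact (hg z).trans (N_bound z)
    refine ⟨g.mkContinuous L habs, fun z => rfl, fun z => ?_⟩
    exact hg z
  by_cases hh : h = 0
  · subst hh
    obtain ⟨g, hg1, hg2⟩ := exists_extension_of_le_sublinear ⟨⊥, 0⟩ N N_hom N_add
      (by rintro ⟨z, hz⟩; simp at hz; subst hz;
          simp [hN, clarkeDeriv_zero])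
    obtain ⟨a, ha1, ha2⟩ := key g hg2
    refine ⟨a, ha2, ?_⟩
    rw [map_zero, hN, clarkeDeriv_zero]
  · set φ : X →ₗ.[ℝ] ℝ := LinearPMap.mkSpanSingleton h (N h) hh with hφ
    have hNneg : -N h ≤ N (-h) := by
      have := neg_clarkeDeriv_le hU lip hx (-h)
      rw [neg_neg] at this
      simpa [hN] using this
    have hdom : ∀ z : φ.domain, φ z ≤ N (z : X) := by
      rintro ⟨z, hz⟩
      have hz' : z ∈ Submodule.span ℝ {h} := hz
      obtain ⟨t, rfl⟩ := Submodule.mem_span_singleton.1 hz'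
      have happ : φ ⟨t • h, hz⟩ = t * N h :=
        (LinearPMap.mkSpanSingleton'_apply h (N h) _ t hz).trans (smul_eq_mul ..)
      rw [happ]
      show t * N h ≤ N (t • h)
      rcases lt_trichotomy t 0 with htneg | rfl | htpos
      · have heq : (t : ℝ) • h = (-t) • (-h) := by rw [smul_neg, neg_smul, neg_neg]
        rw [heq, N_hom (-t) (by linarith) (-h)]
        nlinarith
      · rw [zero_smul, zero_mul]
        exact le_of_eq (clarkeDeriv_zero f x).symm
      · rw [N_hom t htpos]
    obtain ⟨g, hg1, hg2⟩ := exists_extension_of_le_sublinear φ N N_hom N_add hdom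
    obtain ⟨a, ha1, ha2⟩ := key g hg2
    refine ⟨a, ha2, ?_⟩
    have hmem : h ∈ φ.domain := Submodule.mem_span_singleton_self h
    have h1 : g h = φ ⟨h, hmem⟩ := hg1 ⟨h, hmem⟩
    have h2 : φ ⟨h, hmem⟩ = N h := LinearPMap.mkSpanSingleton_apply ℝ ℝ hh (N h)
    rw [ha1 h, h1, h2, hN]

/-- Every continuous linear functional on the weak-* dual is evaluation at a point. -/
lemma exists_eval_of_weakDual_functional (F : WeakDual ℝ X →L[ℝ] ℝ) :
    ∃ h : X, ∀ a : WeakDual ℝ X, F a = a h := by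
  have hinj : Function.Injective (topDualPairing ℝ X) := fun a b hab =>
    ContinuousLinearMap.coe_injective hab
  have hemb := WeakBilin.isEmbedding (B := topDualPairing ℝ X) hinj
  have hnhds : 𝓝 (0 : WeakDual ℝ X) =
      Filter.comap (fun (a : WeakDual ℝ X) (y : X) => topDualPairing ℝ X a y)
        (𝓝 (fun (y : X) => topDualPairing ℝ X (0 : WeakDual ℝ X) y)) :=
    hemb.toIsInducing.nhds_eq_comap 0
  have hzero : (fun (y : X) => topDualPairing ℝ X (0 : WeakDual ℝ X) y) = (0 : X → ℝ) := by
    funext y; rfl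
  have hmem : F ⁻¹' (Set.Ioo (-1 : ℝ) 1) ∈ 𝓝 (0 : WeakDual ℝ X) := by
    apply F.continuous.continuousAt.preimage_mem_nhds
    rw [map_zero]
    exact isOpen_Ioo.mem_nhds (by norm_num)
  rw [hnhds, hzero, Filter.mem_comap] at hmem
  obtain ⟨S, hS, hSsub⟩ := hmem
  rw [nhds_pi, Filter.mem_pi] at hS
  obtain ⟨I, hIfin, t, ht, hIt⟩ := hS
  have claim : ∀ a : WeakDual ℝ X, (∀ x ∈ I, a x = 0) → F a = 0 := by
    intro a ha
    by_contra hFa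
    set c : ℝ := 2 / F a with hc
    have hmemS : (fun y => topDualPairing ℝ X (c • a) y) ∈ S := by
      apply hIt
      intro x hxI
      have hz : (topDualPairing ℝ X a) x = 0 := ha x hxI
      have e : (fun y => topDualPairing ℝ X (c • a) y) x = 0 := by
        show c * (topDualPairing ℝ X a) x = 0
        rw [hz, mul_zero]
      rw [e]; exact mem_of_mem_nhds (ht x)
    have h2 : F (c • a) ∈ Set.Ioo (-1 : ℝ) 1 := hSsub hmemS
    rw [map_smul, hc, smul_eq_mul, div_mul_cancel₀ 2 hFa] at h2
    exact absurd h2.2 (by norm_num)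
  haveI : Fintype ↥I := hIfin.fintype
  set Lmap : ↥I → (WeakDual ℝ X →ₗ[ℝ] ℝ) :=
    fun i => (topDualPairing ℝ X).flip (i : X) with hLmap
  have hker : ⨅ i, LinearMap.ker (Lmap i) ≤ LinearMap.ker (F : WeakDual ℝ X →ₗ[ℝ] ℝ) := by
    intro a ha
    rw [Submodule.mem_iInf] at ha
    rw [LinearMap.mem_ker]
    apply claim
    intro x hxI
    have := ha ⟨x, hxI⟩
    rw [LinearMap.mem_ker] at this
    exact this
  have hspan := mem_span_of_iInf_ker_le_ker hker
  rw [Submodule.mem_span_range_iff_exists_fun] at hspan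
  obtain ⟨cf, hcf⟩ := hspan
  refine ⟨∑ i : ↥I, cf i • (i : X), fun a => ?_⟩
  have h1 : F a = (∑ i : ↥I, cf i • Lmap i) a := by rw [hcf]; rfl
  rw [h1]
  rw [LinearMap.sum_apply, map_sum]
  congr 1
  funext i
  rw [LinearMap.smul_apply, map_smul, hLmap]
  rfl

/-- Corollary 3.2: `inf_{‖h‖≤1} f⁰(A;h) < 0 ↔ 0 ∉ ∂f(A)`; and if `0 ∉ ∂f(A)` and
`(ã,h̃)` satisfies the minimality conditions, then `h̃` is an optimal descent direction. -/
theorem inf_neg_iff_zero_not_mem_setGrad_and_optimal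
    [CompleteSpace X] (A : Set X) (hA : A.Nonempty) (f : X → ℝ)
    (hf : ∃ (L : ℝ≥0) (U : Set X), IsOpen U ∧ A ⊆ U ∧ LipschitzOnWith L f U) :
    (sInf ((fun h => setDeriv f A h) '' Metric.closedBall (0 : X) 1) < 0 ↔
      (0 : StrongDual ℝ X) ∉ setGrad f A) ∧
    ((0 : StrongDual ℝ X) ∉ setGrad f A →
      ∀ a ∈ setGrad f A, (∀ b ∈ setGrad f A, ‖a‖ ≤ ‖b‖) →
        ∀ h : X, ‖h‖ ≤ 1 → (∀ h' : X, ‖h'‖ ≤ 1 → setDeriv f A h ≤ setDeriv f A h') →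
          IsOptimalDescent f A h) := by

  obtain ⟨L, U, hU, hAU, lip⟩ := hf
  obtain ⟨y₀, hy₀⟩ := hA
  have hA' : A.Nonempty := ⟨y₀, hy₀⟩
  -- basic facts about setDeriv
  have hbddA : ∀ h : X, BddAbove ((fun y => clarkeDeriv f y h) '' A) := fun h =>
    ⟨L * ‖h‖, by rintro _ ⟨y, hy, rfl⟩; exact clarkeDeriv_le_bound hU lip (hAU hy) h⟩
  have hSD_le : ∀ (h : X) (c : ℝ), (∀ y ∈ A, clarkeDeriv f y h ≤ c) → setDeriv f A h ≤ c :=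
    fun h c hc => csSup_le (hA'.image _) (by rintro _ ⟨y, hy, rfl⟩; exact hc y hy)
  have hle_SD : ∀ (h : X), ∀ y ∈ A, clarkeDeriv f y h ≤ setDeriv f A h :=
    fun h y hy => le_csSup (hbddA h) ⟨y, hy, rfl⟩
  have hSD_lb : ∀ h : X, ‖h‖ ≤ 1 → -(L:ℝ) ≤ setDeriv f A h := by
    intro h hh
    have h1 := neg_bound_le_clarkeDeriv hU lip (hAU hy₀) h
    have h2 : -(L:ℝ) ≤ -((L:ℝ) * ‖h‖) := by nlinarith [L.coe_nonneg, norm_nonneg h]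
    exact h2.trans (h1.trans (hle_SD h y₀ hy₀))
  have hbddBelow : BddBelow ((fun h => setDeriv f A h) '' Metric.closedBall (0:X) 1) := by
    refine ⟨-(L:ℝ), ?_⟩
    rintro _ ⟨h, hh, rfl⟩
    exact hSD_lb h (by simpa [Metric.mem_closedBall, dist_zero_right] using hh)
  have hSD0 : setDeriv f A (0:X) = 0 := by
    rw [setDeriv, show (fun y => clarkeDeriv f y (0:X)) = fun _ => (0:ℝ) from
      funext (fun y => clarkeDeriv_zero f y), Set.Nonempty.image_const hA' 0, csSup_singleton]
  -- easy direction: gradient members are bounded by setDeriv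
  have hgrad_le : ∀ a ∈ setGrad f A, ∀ h : X, a h ≤ setDeriv f A h := by
    intro a ha h
    have hD : Convex ℝ {b : StrongDual ℝ X | b h ≤ setDeriv f A h} :=
      convex_halfSpace_le ⟨fun _ _ => rfl, fun _ _ => rfl⟩ _
    have hUnion : (⋃ y ∈ A, clarkeGrad f y) ⊆ {b : StrongDual ℝ X | b h ≤ setDeriv f A h} := by
      intro b hb
      rw [Set.mem_iUnion₂] at hb
      obtain ⟨y, hy, hby⟩ := hb
      exact le_trans (hby h) (hle_SD h y hy)
    have hhull := convexHull_min hUnion hD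
    have hC : IsClosed {b : WeakDual ℝ X | b h ≤ setDeriv f A h} :=
      isClosed_le (WeakDual.eval_continuous h) continuous_const
    have hsub : (StrongDual.toWeakDual (𝕜 := ℝ) (E := X)) '' (convexHull ℝ (⋃ y ∈ A, clarkeGrad f y))
        ⊆ {b : WeakDual ℝ X | b h ≤ setDeriv f A h} := by
      rintro _ ⟨b, hb, rfl⟩
      exact hhull hb
    have := closure_minimal hsub hC
    exact this ha
  -- key: 0 ∉ setGrad → exists descent direction in the unit ball
  have key : (0 : StrongDual ℝ X) ∉ setGrad f A →
      ∃ hstar : X, ‖hstar‖ ≤ 1 ∧ setDeriv f A hstar < 0 := by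
    intro h0
    set T := (StrongDual.toWeakDual (𝕜 := ℝ) (E := X)) '' (convexHull ℝ (⋃ y ∈ A, clarkeGrad f y))
      with hT
    have hTconv : Convex ℝ (closure T) := by
      apply Convex.closure
      exact (convex_convexHull ℝ _).is_linear_image ⟨fun _ _ => rfl, fun _ _ => rfl⟩
    have h0T : (0 : WeakDual ℝ X) ∉ closure T := by
      intro hmem
      apply h0
      show StrongDual.toWeakDual (0 : StrongDual ℝ X) ∈ closure T
      rw [map_zero]
      exact hmem
    haveI : LocallyConvexSpace ℝ (WeakDual ℝ X) :=
      (WeakBilin.locallyConvexSpace (B := topDualPairing ℝ X) : _)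
    obtain ⟨F, u, hFb, hFu⟩ := geometric_hahn_banach_closed_point hTconv isClosed_closure h0T
    have hu0 : u < 0 := by rw [map_zero] at hFu; exact hFu
    obtain ⟨h₀, hh₀⟩ := exists_eval_of_weakDual_functional F
    have hAbound : ∀ y ∈ A, clarkeDeriv f y h₀ ≤ u := by
      intro y hy
      obtain ⟨a, haG, haEq⟩ := exists_clarkeGrad_eq hU lip (hAU hy) h₀
      have haT : StrongDual.toWeakDual a ∈ closure T :=
        subset_closure ⟨a, subset_convexHull ℝ _ (Set.mem_iUnion₂.2 ⟨y, hy, haG⟩), rfl⟩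
      have hlt := hFb _ haT
      rw [hh₀ (StrongDual.toWeakDual a)] at hlt
      rw [← haEq]
      exact le_of_lt hlt
    have hSDh₀ : setDeriv f A h₀ ≤ u := hSD_le h₀ u hAbound
    have hh0ne : h₀ ≠ 0 := by
      rintro rfl
      rw [hSD0] at hSDh₀
      linarith
    have hpos : 0 < ‖h₀‖ := norm_pos_iff.2 hh0ne
    refine ⟨‖h₀‖⁻¹ • h₀, ?_, ?_⟩
    · rw [norm_smul, Real.norm_eq_abs, abs_of_pos (inv_pos.2 hpos), inv_mul_cancel₀ hpos.ne']
    · have hb : ∀ y ∈ A, clarkeDeriv f y (‖h₀‖⁻¹ • h₀) ≤ ‖h₀‖⁻¹ * u := by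
        intro y hy
        rw [clarkeDeriv_smul hU lip (hAU hy) h₀ (inv_pos.2 hpos)]
        exact mul_le_mul_of_nonneg_left (hAbound y hy) (inv_nonneg.2 hpos.le)
      exact lt_of_le_of_lt (hSD_le _ _ hb) (mul_neg_of_pos_of_neg (inv_pos.2 hpos) hu0)
  constructor
  · constructor
    · -- sInf < 0 → 0 ∉ setGrad
      intro hlt h0mem
      obtain ⟨z, hz, hzlt⟩ := exists_lt_of_csInf_lt
        (Set.Nonempty.image _ ⟨0, Metric.mem_closedBall_self (by norm_num)⟩) hlt
      obtain ⟨h, hhball, rfl⟩ := hz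
      have := hgrad_le 0 h0mem h
      rw [ContinuousLinearMap.zero_apply] at this
      linarith
    · -- 0 ∉ setGrad → sInf < 0
      intro h0
      obtain ⟨hstar, hs1, hs2⟩ := key h0
      have hmem : setDeriv f A hstar ∈ (fun h => setDeriv f A h) '' Metric.closedBall (0:X) 1 :=
        ⟨hstar, by simpa [Metric.mem_closedBall, dist_zero_right] using hs1, rfl⟩
      exact lt_of_le_of_lt (csInf_le hbddBelow hmem) hs2
  · -- the moreover part
    intro h0 a ha hamin h hh hmin
    obtain ⟨hstar, hs1, hs2⟩ := key h0
    have hneg : setDeriv f A h < 0 := lt_of_le_of_lt (hmin hstar hs1) hs2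
    have hne : h ≠ 0 := by
      rintro rfl
      rw [hSD0] at hneg
      exact lt_irrefl 0 hneg
    have hpos : 0 < ‖h‖ := norm_pos_iff.2 hne
    have hnorm1 : ‖h‖ = 1 := by
      by_contra hne1
      have hlt1 : ‖h‖ < 1 := lt_of_le_of_ne hh hne1
      set c : ℝ := ‖h‖⁻¹ with hc
      have hcpos : 0 < c := inv_pos.2 hpos
      have hcmul : c * ‖h‖ = 1 := inv_mul_cancel₀ hpos.ne'
      have hc1 : 1 < c := by nlinarith
      have hcball : ‖c • h‖ ≤ 1 := by
        rw [norm_smul, Real.norm_eq_abs, abs_of_pos hcpos, hcmul]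
      have hsd : setDeriv f A (c • h) ≤ c * setDeriv f A h := by
        apply hSD_le
        intro y hy
        rw [clarkeDeriv_smul hU lip (hAU hy) h hcpos]
        exact mul_le_mul_of_nonneg_left (hle_SD h y hy) hcpos.le
      have hchain : setDeriv f A h ≤ setDeriv f A (c • h) := hmin _ hcball
      nlinarith
    exact ⟨hnorm1, hmin, hneg⟩
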